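/- arXiv:1404.0963 — 4 statements merged into one kernel-verified Lean document; each statement's English description precedes it below -/
import Mathlib

section
/- Let $c, \theta > 0$ be constants and let $(R_k)_{k \ge 0}$ be a sequence of nonnegative real numbers such that for every $k \ge 1$, $R_k \le \sum_{l=1}^{k} \theta^l R_{k-l} + \theta^k c$. Then for all $k \ge 1$, $R_k \le \frac{1}{2}(2\theta)^k (R_0 + c)$. -/
/-!
Since the weights `θ ^ l` are nonnegative, the recursive bound is monotone in the earlier terms,
so `R` is dominated by any supersolution of the recursion with the same initial value. The
sequence equal to `R 0` at `0` and to `(R 0 + c) / 2 * (2θ) ^ k` for `k ≥ 1` solves the recursion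
with equality, because `∑_{l=1}^{k-1} 2 ^ (k - l) = 2 ^ k - 2`.
-/

open Finset

theorem le_of_le_weighted_sum_of_supersolution {a g R S : ℕ → ℝ} (ha : ∀ l, 0 ≤ a l)
    (hR : ∀ k, 1 ≤ k → R k ≤ ∑ l ∈ Icc 1 k, a l * R (k - l) + g k)
    (hS : ∀ k, 1 ≤ k → ∑ l ∈ Icc 1 k, a l * S (k - l) + g k ≤ S k)
    (h0 : R 0 ≤ S 0) (k : ℕ) : R k ≤ S k := by
  induction k using Nat.strong_induction_on with
  | _ k ih =>
    rcases Nat.eq_zero_or_pos k with rfl | hk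
    · exact h0
    calc R k ≤ ∑ l ∈ Icc 1 k, a l * R (k - l) + g k := hR k hk
      _ ≤ ∑ l ∈ Icc 1 k, a l * S (k - l) + g k := by
        gcongr with l hl
        · exact ha l
        · exact ih _ (by grind)
      _ ≤ S k := hS k hk

theorem sum_Icc_two_pow_succ_sub (m : ℕ) :
    ∑ l ∈ Icc 1 m, (2 : ℝ) ^ (m + 1 - l) = 2 ^ (m + 1) - 2 := by
  rw [← Ico_succ_right_eq_Icc, Order.succ_eq_add_one,
    sum_Ico_reflect (fun i ↦ (2 : ℝ) ^ i) 1 (n := m + 1) (by omega), sum_Ico_eq_sum_range]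
  simp only [Nat.add_sub_cancel, Nat.add_sub_cancel_left, pow_add, ← mul_sum,
    geom_sum_eq (by norm_num : (2 : ℝ) ≠ 1)]
  ring

noncomputable def geomMajorant (θ a c : ℝ) (j : ℕ) : ℝ :=
  if j = 0 then a else (a + c) / 2 * (2 * θ) ^ j

theorem sum_pow_mul_geomMajorant_add_pow_mul (θ a c : ℝ) {k : ℕ} (hk : 1 ≤ k) :
    ∑ l ∈ Icc 1 k, θ ^ l * geomMajorant θ a c (k - l) + θ ^ k * c = geomMajorant θ a c k := by
  obtain ⟨m, rfl⟩ : ∃ m, k = m + 1 := ⟨k - 1, by omega⟩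
  have hterm : ∀ l ∈ Icc 1 m,
      θ ^ l * geomMajorant θ a c (m + 1 - l) = (a + c) / 2 * θ ^ (m + 1) * 2 ^ (m + 1 - l) := by
    intro l hl
    obtain ⟨hl1, hlm⟩ := mem_Icc.mp hl
    rw [geomMajorant, if_neg (by omega), mul_pow, ← Nat.add_sub_cancel' (by omega : l ≤ m + 1),
      pow_add, Nat.add_sub_cancel_left]
    ring
  rw [sum_Icc_succ_top (by omega), sum_congr rfl hterm, ← mul_sum, sum_Icc_two_pow_succ_sub,
    Nat.sub_self]
  simp only [geomMajorant, if_pos, if_neg (Nat.succ_ne_zero m), mul_pow]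
  ring

theorem stmt_3_general (c θ : ℝ) (hθ : 0 < θ) (R : ℕ → ℝ)
    (hrec : ∀ k, 1 ≤ k → R k ≤ (∑ l ∈ Finset.Icc 1 k, θ ^ l * R (k - l)) + θ ^ k * c) :
    ∀ k, 1 ≤ k → R k ≤ (1 / 2) * (2 * θ) ^ k * (R 0 + c) := by
  intro k hk
  calc R k ≤ geomMajorant θ (R 0) c k :=
        le_of_le_weighted_sum_of_supersolution (fun l ↦ by positivity) hrec
          (fun k hk ↦ (sum_pow_mul_geomMajorant_add_pow_mul θ (R 0) c hk).le)
          (by simp [geomMajorant]) k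
    _ = (1 / 2) * (2 * θ) ^ k * (R 0 + c) := by rw [geomMajorant, if_neg (by omega)]; ring

theorem stmt_3 (c θ : ℝ) (hc : 0 < c) (hθ : 0 < θ) (R : ℕ → ℝ)
    (hR0 : ∀ k, 0 ≤ R k)
    (hrec : ∀ k, 1 ≤ k → R k ≤ (∑ l ∈ Finset.Icc 1 k, θ ^ l * R (k - l)) + θ ^ k * c) :
    ∀ k, 1 ≤ k → R k ≤ (1 / 2) * (2 * θ) ^ k * (R 0 + c) :=
  stmt_3_general c θ hθ R hrec
end

section
/- Let $W, \widetilde W$ be Banach spaces and $G: W \to \widetilde W$ twice continuously Fréchet differentiable. Let $u, \Delta u, \tilde u, \widetilde{\Delta u} \in W$. Then $\|G(u + \Delta u) - G(u) - (G(\tilde u + \widetilde{\Delta u}) - G(\tilde u))\|_{\widetilde W} \le C_{G'} \|\Delta u - \widetilde{\Delta u}\|_W + C_{G''} (\|u - \tilde u\|_W + \|\Delta u - \widetilde{\Delta u}\|_W) \|\Delta u\|_W$, where $C_{G'} = \sup_{t\in[0,1]} \|G'(\tilde u + t \widetilde{\Delta u})\|$ and $C_{G''} = \sup_{s,t \in [0,1]}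 \|G''(\xi(t,s))\|$ with $\xi(t,s) = (\tilde u + t\widetilde{\Delta u}) + s\big((u - \tilde u) + t(\Delta u - \widetilde{\Delta u})\big)$. -/
/-! Both increments are compared along the parameter `t ↦ G (u + t • Δu) - G (tu + t • tΔu)`
by the mean value inequality. Its derivative `G'(u + tΔu) Δu - G'(tu + t tΔu) tΔu` splits as
`(G'(u + tΔu) - G'(tu + t tΔu)) Δu + G'(tu + t tΔu) (Δu - tΔu)`; the second term is bounded by
`C_{G'}`, and the first by a second mean value inequality for `G'` on the segment
`s ↦ ξ t s`, whose direction `(u - tu) + t (Δu - tΔu)` has norm at most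
`‖u - tu‖ + ‖Δu - tΔu‖`. -/

open Set

section

variable {E F : Type*} [NormedAddCommGroup E] [NormedSpace ℝ E]
  [NormedAddCommGroup F] [NormedSpace ℝ F]

theorem le_ciSup_of_continuous {X : Type*} [TopologicalSpace X] [CompactSpace X]
    {f : X → ℝ} (hf : Continuous f) (x : X) : f x ≤ ⨆ y, f y :=
  le_ciSup (isCompact_range hf).bddAbove x

theorem norm_add_smul_le_of_mem_Icc (x y : E) {t : ℝ} (ht : t ∈ Icc (0 : ℝ) 1) :
    ‖x + t • y‖ ≤ ‖x‖ + ‖y‖ := by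
  calc ‖x + t • y‖ ≤ ‖x‖ + ‖t • y‖ := norm_add_le _ _
    _ ≤ ‖x‖ + ‖y‖ := by
      rw [norm_smul, Real.norm_of_nonneg ht.1]
      gcongr
      exact mul_le_of_le_one_left (norm_nonneg _) ht.2

theorem ContinuousLinearMap.norm_apply_sub_apply_le (A B : E →L[ℝ] F) (x y : E) :
    ‖A x - B y‖ ≤ ‖A - B‖ * ‖x‖ + ‖B‖ * ‖x - y‖ := by
  have hsplit : A x - B y = (A - B) x + B (x - y) := by
    simp only [sub_apply, map_sub]
    abel
  rw [hsplit]
  exact (norm_add_le _ _).trans (add_le_add (le_opNorm _ _) (le_opNorm _ _))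

theorem norm_image_sub_le_of_norm_fderiv_le_lineMap {f : E → F} (hf : Differentiable ℝ f)
    {a b : E} {C : ℝ} (bound : ∀ s ∈ Icc (0 : ℝ) 1, ‖fderiv ℝ f (a + s • (b - a))‖ ≤ C) :
    ‖f b - f a‖ ≤ C * ‖b - a‖ := by
  refine (convex_segment a b).norm_image_sub_le_of_norm_fderiv_le (fun x _ => hf x) ?_
    (left_mem_segment ℝ a b) (right_mem_segment ℝ a b)
  rw [segment_eq_image']
  rintro _ ⟨s, hs, rfl⟩
  exact bound s hs

theorem norm_increment_sub_increment_le {G : E → F} (hG : Differentiable ℝ G)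
    (u Δu v Δv : E) {M : ℝ}
    (bound : ∀ t ∈ Ico (0 : ℝ) 1,
      ‖fderiv ℝ G (u + t • Δu) Δu - fderiv ℝ G (v + t • Δv) Δv‖ ≤ M) :
    ‖G (u + Δu) - G u - (G (v + Δv) - G v)‖ ≤ M := by
  have hline : ∀ (w Δw : E) (t : ℝ), HasDerivAt (fun s : ℝ => w + s • Δw) Δw t := fun w Δw t => by
    simpa using ((hasDerivAt_id t).smul_const Δw).const_add w
  have hderiv : ∀ t : ℝ, HasDerivAt (fun s : ℝ => G (u + s • Δu) - G (v + s • Δv))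
      (fderiv ℝ G (u + t • Δu) Δu - fderiv ℝ G (v + t • Δv) Δv) t := fun t =>
    ((hG _).hasFDerivAt.comp_hasDerivAt t (hline u Δu t)).sub
      ((hG _).hasFDerivAt.comp_hasDerivAt t (hline v Δv t))
  have hmvt := norm_image_sub_le_of_norm_deriv_le_segment_01'
    (fun t _ => (hderiv t).hasDerivWithinAt) bound
  convert hmvt using 2
  simp only [one_smul, zero_smul, add_zero]
  abel

end

theorem stmt_13 (W W' : Type*)
    [NormedAddCommGroup W] [NormedSpace ℝ W]
    [NormedAddCommGroup W'] [NormedSpace ℝ W']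
    (G : W → W') (hG : ContDiff ℝ 2 G)
    (u Δu tu tΔu : W)
    (ξ : ℝ → ℝ → W)
    (hξ : ∀ t s : ℝ, ξ t s = (tu + t • tΔu) + s • ((u - tu) + t • (Δu - tΔu)))
    (CG' CG'' : ℝ)
    (hCG' : CG' = ⨆ t : Set.Icc (0:ℝ) 1, ‖fderiv ℝ G (tu + (t : ℝ) • tΔu)‖)
    (hCG'' : CG'' = ⨆ p : Set.Icc (0:ℝ) 1 × Set.Icc (0:ℝ) 1,
      ‖fderiv ℝ (fderiv ℝ G) (ξ (p.1 : ℝ) (p.2 : ℝ))‖) :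
    ‖G (u + Δu) - G u - (G (tu + tΔu) - G tu)‖ ≤
      CG' * ‖Δu - tΔu‖ + CG'' * (‖u - tu‖ + ‖Δu - tΔu‖) * ‖Δu‖ := by
  have hG' : ContDiff ℝ 1 (fderiv ℝ G) := hG.fderiv_right (by norm_num)
  obtain rfl : ξ = _ := funext₂ hξ
  have hCG'_le : ∀ t ∈ Icc (0 : ℝ) 1, ‖fderiv ℝ G (tu + t • tΔu)‖ ≤ CG' := fun t ht =>
    hCG' ▸ le_ciSup_of_continuous (hG'.continuous.comp (by fun_prop :
      Continuous fun t : Icc (0 : ℝ) 1 => tu + (t : ℝ) • tΔu)).norm ⟨t, ht⟩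
  have hCG''_le : ∀ t ∈ Icc (0 : ℝ) 1, ∀ s ∈ Icc (0 : ℝ) 1,
      ‖fderiv ℝ (fderiv ℝ G) (tu + t • tΔu + s • (u - tu + t • (Δu - tΔu)))‖ ≤ CG'' :=
    fun t ht s hs => hCG'' ▸ le_ciSup_of_continuous
      ((hG'.continuous_fderiv one_ne_zero).comp (by fun_prop :
        Continuous fun p : Icc (0 : ℝ) 1 × Icc (0 : ℝ) 1 =>
          tu + (p.1 : ℝ) • tΔu + (p.2 : ℝ) • (u - tu + (p.1 : ℝ) • (Δu - tΔu)))).norm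
      (⟨t, ht⟩, ⟨s, hs⟩)
  have hCG''_nonneg : 0 ≤ CG'' := by
    have h := hCG''_le 0 (left_mem_Icc.2 zero_le_one) 0 (left_mem_Icc.2 zero_le_one)
    exact le_trans (by positivity) h
  refine norm_increment_sub_increment_le (hG.differentiable two_ne_zero) u Δu tu tΔu
    fun t ht => ?_
  have ht' : t ∈ Icc (0 : ℝ) 1 := Ico_subset_Icc_self ht
  have hdir : u + t • Δu - (tu + t • tΔu) = u - tu + t • (Δu - tΔu) := by
    rw [smul_sub]; abel
  have hG'_sub : ‖fderiv ℝ G (u + t • Δu) - fderiv ℝ G (tu + t • tΔu)‖ ≤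
      CG'' * (‖u - tu‖ + ‖Δu - tΔu‖) := by
    refine (norm_image_sub_le_of_norm_fderiv_le_lineMap (C := CG'') (hG'.differentiable one_ne_zero)
      fun s hs => ?_).trans ?_
    · rw [hdir]; exact hCG''_le t ht' s hs
    · rw [hdir]; exact mul_le_mul_of_nonneg_left (norm_add_smul_le_of_mem_Icc _ _ ht') hCG''_nonneg
  calc _ ≤ ‖fderiv ℝ G (u + t • Δu) - fderiv ℝ G (tu + t • tΔu)‖ * ‖Δu‖
        + ‖fderiv ℝ G (tu + t • tΔu)‖ * ‖Δu - tΔu‖ :=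
        ContinuousLinearMap.norm_apply_sub_apply_le _ _ _ _
    _ ≤ CG'' * (‖u - tu‖ + ‖Δu - tΔu‖) * ‖Δu‖ + CG' * ‖Δu - tΔu‖ := by
        gcongr
        exact hCG'_le t ht'
    _ = _ := add_comm _ _
end

section
/- Assume the hypotheses: (A1) $\|Q - Q_{h}\| \le c_1 h^\alpha$; (A2) cost per sample $C_\ell \le c_2 h_\ell^{-\gamma}$; (A3) the level-$\ell$ sampling error is at most $c_3 M_\ell^{-\mu_2} \varphi_\ell$ (no log factor, $\mu_1 = 0$); (A4) $\varphi_\ell \le c_4 h_\ell^\beta$, with $h_\ell = h_0 s^{-\ell}$, $s > 1$, constants $c_i \ge 1$, $\alpha,\beta,\gamma,\mu_2 > 0$, $\alpha < \gamma\mu_2$, and $\beta > \gamma\mu_2$. Then for every $0 < \varepsilon < \min(2\varphi_0, 1/e)$ there exist an integer $L$ and real sample sizes $M_0,\dots,M_L > 0$ such that the total error bound $c_1 h_L^\alpha + c_3\sum_{\ell=0}^L M_\ell^{-\mu_2}\varphi_\ell \le \varepsilon$ holds while the total cost satisfies $\sum_{\ell=0}^{L} M_\ell C_\ell \le d_3\,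 \varepsilon^{-1/\mu_2}$ for a constant $d_3$ independent of $\varepsilon$. -/
open Real Filter Topology Finset

/-!
With `h_ℓ = h₀ s^{-ℓ}`, fix `0 < δ < β - γ μ₂` and take `L` so large that the bias
`c₁ h_L^α` is at most `ε/2` (it tends to `0`). The sample sizes
`M_ℓ = (y φ_ℓ h_ℓ^{-δ})^{1/μ₂}`, with `y` proportional to `1/ε`, make the level-`ℓ` sampling error
`M_ℓ^{-μ₂} φ_ℓ = h_ℓ^δ / y` geometric in `ℓ`, so the sampling error is at most `ε/2` for
every `L`. By (A2) and (A4) the level-`ℓ` cost is at most a multiple of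
`y^{1/μ₂} h_ℓ^{(β - γμ₂ - δ)/μ₂}`, again geometric because `β > γμ₂`, hence the total cost is
`O(y^{1/μ₂}) = O(ε^{-1/μ₂})` uniformly in `L`.
-/

noncomputable def meshSize (h0 s : ℝ) (ℓ : ℕ) : ℝ := h0 * s ^ (-(ℓ : ℝ))

section Mesh

variable {h0 s : ℝ}

lemma meshSize_pos (hh0 : 0 < h0) (hs : 0 < s) (ℓ : ℕ) : 0 < meshSize h0 s ℓ := by
  unfold meshSize; positivity

lemma meshSize_rpow (hh0 : 0 < h0) (hs : 0 < s) (a : ℝ) (ℓ : ℕ) :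
    meshSize h0 s ℓ ^ a = h0 ^ a * (s ^ (-a)) ^ ℓ := by
  rw [meshSize, mul_rpow hh0.le (rpow_nonneg hs.le _), ← rpow_mul hs.le, ← rpow_natCast,
    ← rpow_mul hs.le, mul_comm (h0 ^ a)]
  ring_nf

lemma tendsto_meshSize_rpow (hh0 : 0 < h0) (hs : 1 < s) {a : ℝ} (ha : 0 < a) :
    Tendsto (fun ℓ ↦ meshSize h0 s ℓ ^ a) atTop (𝓝 0) := by
  simp_rw [meshSize_rpow hh0 (zero_lt_one.trans hs)]
  simpa using (tendsto_pow_atTop_nhds_zero_of_lt_one (rpow_nonneg (zero_lt_one.trans hs).le _)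
    (rpow_lt_one_of_one_lt_of_neg hs (neg_neg_of_pos ha))).const_mul (h0 ^ a)

lemma sum_meshSize_rpow_le (hh0 : 0 < h0) (hs : 1 < s) {a : ℝ} (ha : 0 < a) (n : ℕ) :
    ∑ ℓ ∈ range n, meshSize h0 s ℓ ^ a ≤ h0 ^ a / (1 - s ^ (-a)) := by
  simp_rw [meshSize_rpow hh0 (zero_lt_one.trans hs), ← mul_sum]
  rw [← mul_one_div]
  gcongr
  have := geom_sum_Ico_le_of_lt_one (m := 0) (n := n) (rpow_nonneg (zero_lt_one.trans hs).le _)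
    (rpow_lt_one_of_one_lt_of_neg hs (neg_neg_of_pos ha))
  rwa [← range_eq_Ico, pow_zero] at this

lemma rpow_div_one_sub_rpow_neg_pos (hh0 : 0 < h0) (hs : 1 < s) {a : ℝ} (ha : 0 < a) :
    0 < h0 ^ a / (1 - s ^ (-a)) :=
  div_pos (rpow_pos_of_pos hh0 _) (sub_pos.2 (rpow_lt_one_of_one_lt_of_neg hs (neg_neg_of_pos ha)))

end Mesh

lemma rpow_inv_rpow_neg_mul {y φ h δ μ : ℝ} (hy : 0 < y) (hφ : 0 < φ) (hh : 0 < h) (hμ : μ ≠ 0) :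
    ((y * φ * h ^ (-δ)) ^ μ⁻¹) ^ (-μ) * φ = h ^ δ / y := by
  rw [rpow_neg (by positivity), rpow_inv_rpow (by positivity) hμ, rpow_neg hh.le]
  field_simp

lemma rpow_inv_mul_le {y φ C c2 c4 h β γ δ μ : ℝ} (hμ : 0 < μ) (hh : 0 < h) (hy : 0 ≤ y)
    (hc2 : 0 ≤ c2) (hc4 : 0 ≤ c4) (hφ : 0 ≤ φ) (hφle : φ ≤ c4 * h ^ β) (hC : C ≤ c2 * h ^ (-γ)) :
    (y * φ * h ^ (-δ)) ^ μ⁻¹ * C ≤ c2 * (y * c4) ^ μ⁻¹ * h ^ ((β - γ * μ - δ) / μ) := by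
  have hγ : h ^ (-γ) = (h ^ (-γ * μ)) ^ μ⁻¹ := by
    rw [← rpow_mul hh.le, mul_assoc, mul_inv_cancel₀ hμ.ne', mul_one]
  have hexp : h ^ ((β - γ * μ - δ) / μ) = (h ^ β * h ^ (-δ) * h ^ (-γ * μ)) ^ μ⁻¹ := by
    rw [← rpow_add hh, ← rpow_add hh, ← rpow_mul hh.le]
    ring_nf
  calc (y * φ * h ^ (-δ)) ^ μ⁻¹ * C ≤ (y * (c4 * h ^ β) * h ^ (-δ)) ^ μ⁻¹ * (c2 * h ^ (-γ)) := by
        grw [hC, hφle]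
    _ = c2 * (y * c4) ^ μ⁻¹ * h ^ ((β - γ * μ - δ) / μ) := by
        have hb : 0 ≤ h ^ β * h ^ (-δ) := by positivity
        rw [hγ, hexp, mul_rpow hb (by positivity), show y * (c4 * h ^ β) * h ^ (-δ) =
          y * c4 * (h ^ β * h ^ (-δ)) by ring, mul_rpow (by positivity) hb]
        ring

noncomputable def sampleSize (h0 s μ δ y : ℝ) (φ : ℕ → ℝ) (ℓ : ℕ) : ℝ :=
  (y * φ ℓ * meshSize h0 s ℓ ^ (-δ)) ^ μ⁻¹

section SampleSize

variable {h0 s μ δ y : ℝ} {φ : ℕ → ℝ}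

lemma sampleSize_pos (hh0 : 0 < h0) (hs : 0 < s) (hy : 0 < y) (hφ : ∀ ℓ, 0 < φ ℓ) (ℓ : ℕ) :
    0 < sampleSize h0 s μ δ y φ ℓ :=
  rpow_pos_of_pos (mul_pos (mul_pos hy (hφ ℓ)) (rpow_pos_of_pos (meshSize_pos hh0 hs ℓ) _)) _

lemma sum_sampleSize_rpow_neg_mul_le (hh0 : 0 < h0) (hs : 1 < s) (hμ : μ ≠ 0) (hδ : 0 < δ)
    (hy : 0 < y) (hφ : ∀ ℓ, 0 < φ ℓ) (n : ℕ) :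
    ∑ ℓ ∈ range n, sampleSize h0 s μ δ y φ ℓ ^ (-μ) * φ ℓ ≤ h0 ^ δ / (1 - s ^ (-δ)) / y := by
  simp_rw [sampleSize,
    rpow_inv_rpow_neg_mul hy (hφ _) (meshSize_pos hh0 (zero_lt_one.trans hs) _) hμ, ← sum_div]
  gcongr
  exact sum_meshSize_rpow_le hh0 hs hδ n

lemma sum_sampleSize_mul_le {C : ℕ → ℝ} {c2 c4 β γ : ℝ} (hh0 : 0 < h0) (hs : 1 < s)
    (hμ : 0 < μ) (hδ : δ < β - γ * μ) (hy : 0 ≤ y) (hc2 : 0 ≤ c2) (hc4 : 0 ≤ c4)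
    (hφ : ∀ ℓ, 0 ≤ φ ℓ) (hφle : ∀ ℓ, φ ℓ ≤ c4 * meshSize h0 s ℓ ^ β)
    (hC : ∀ ℓ, C ℓ ≤ c2 * meshSize h0 s ℓ ^ (-γ)) (n : ℕ) :
    ∑ ℓ ∈ range n, sampleSize h0 s μ δ y φ ℓ * C ℓ ≤
      c2 * (y * c4) ^ μ⁻¹ *
        (h0 ^ ((β - γ * μ - δ) / μ) / (1 - s ^ (-((β - γ * μ - δ) / μ)))) := by
  calc ∑ ℓ ∈ range n, sampleSize h0 s μ δ y φ ℓ * C ℓ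
      ≤ ∑ ℓ ∈ range n, c2 * (y * c4) ^ μ⁻¹ * meshSize h0 s ℓ ^ ((β - γ * μ - δ) / μ) :=
        sum_le_sum fun ℓ _ ↦ rpow_inv_mul_le hμ (meshSize_pos hh0 (zero_lt_one.trans hs) ℓ) hy
          hc2 hc4 (hφ ℓ) (hφle ℓ) (hC ℓ)
    _ ≤ _ := by
        rw [← mul_sum]
        gcongr
        exact sum_meshSize_rpow_le hh0 hs (div_pos (by linarith) hμ) n

end SampleSize

theorem stmt_16_general (c1 c2 c3 c4 α β γ μ2 h0 s : ℝ)
    (hc2 : 1 ≤ c2) (hc3 : 1 ≤ c3) (hc4 : 1 ≤ c4)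
    (hα : 0 < α) (hμ2 : 0 < μ2)
    (hβγ : γ * μ2 < β)
    (hh0 : 0 < h0) (hs : 1 < s)
    (C φ : ℕ → ℝ)
    (hφpos : ∀ ℓ, 0 < φ ℓ)
    (hA2 : ∀ ℓ, C ℓ ≤ c2 * (h0 * s ^ (-(ℓ : ℝ))) ^ (-γ))
    (hA4 : ∀ ℓ, φ ℓ ≤ c4 * (h0 * s ^ (-(ℓ : ℝ))) ^ β) :
    ∃ d3 : ℝ, 0 < d3 ∧ ∀ ε : ℝ, 0 < ε → ε < min (2 * φ 0) (1 / Real.exp 1) →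
      ∃ (L : ℕ) (M : ℕ → ℝ), (∀ ℓ ∈ Finset.range (L + 1), 0 < M ℓ) ∧
        c1 * (h0 * s ^ (-(L : ℝ))) ^ α +
          c3 * ∑ ℓ ∈ Finset.range (L + 1), M ℓ ^ (-μ2) * φ ℓ ≤ ε ∧
        ∑ ℓ ∈ Finset.range (L + 1), M ℓ * C ℓ ≤ d3 * ε ^ (-(1 / μ2)) := by
  obtain ⟨δ, hδ, hδβ⟩ : ∃ δ, 0 < δ ∧ δ < β - γ * μ2 := ⟨(β - γ * μ2) / 2, by linarith, by linarith⟩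
  set S := h0 ^ δ / (1 - s ^ (-δ))
  set T := h0 ^ ((β - γ * μ2 - δ) / μ2) / (1 - s ^ (-((β - γ * μ2 - δ) / μ2)))
  have hS : 0 < S := rpow_div_one_sub_rpow_neg_pos hh0 hs hδ
  have hT : 0 < T := rpow_div_one_sub_rpow_neg_pos hh0 hs (div_pos (by linarith) hμ2)
  refine ⟨c2 * (2 * c3 * S * c4) ^ μ2⁻¹ * T, by positivity, fun ε hε _ ↦ ?_⟩
  obtain ⟨L, hL⟩ := (((tendsto_meshSize_rpow hh0 hs hα).const_mul c1).eventually
    (ge_mem_nhds (by linarith : c1 * 0 < ε / 2))).exists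
  have hy : 0 < 2 * c3 * S / ε := by positivity
  refine ⟨L, sampleSize h0 s μ2 δ (2 * c3 * S / ε) φ,
    fun ℓ _ ↦ sampleSize_pos hh0 (by linarith) hy hφpos ℓ, ?_, ?_⟩
  · refine (add_le_add hL ?_).trans_eq (add_halves ε)
    calc _ ≤ c3 * (S / (2 * c3 * S / ε)) := by
          gcongr
          exact sum_sampleSize_rpow_neg_mul_le hh0 hs hμ2.ne' hδ hy hφpos (L + 1)
      _ = ε / 2 := by field_simp
  · calc _ ≤ c2 * (2 * c3 * S / ε * c4) ^ μ2⁻¹ * T :=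
          sum_sampleSize_mul_le hh0 hs hμ2 hδβ hy.le (by linarith) (by linarith)
            (fun ℓ ↦ (hφpos ℓ).le) hA4 hA2 (L + 1)
      _ = _ := by
        rw [div_mul_eq_mul_div, div_rpow (by positivity) hε.le, rpow_neg hε.le, one_div]
        ring

theorem stmt_16 (c1 c2 c3 c4 α β γ μ2 h0 s : ℝ)
    (hc1 : 1 ≤ c1) (hc2 : 1 ≤ c2) (hc3 : 1 ≤ c3) (hc4 : 1 ≤ c4)
    (hα : 0 < α) (hβ : 0 < β) (hγ : 0 < γ) (hμ2 : 0 < μ2)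
    (hαγ : α < γ * μ2) (hβγ : γ * μ2 < β)
    (hh0 : 0 < h0) (hs : 1 < s)
    (C φ : ℕ → ℝ)
    (hCpos : ∀ ℓ, 0 < C ℓ) (hφpos : ∀ ℓ, 0 < φ ℓ)
    (hA2 : ∀ ℓ, C ℓ ≤ c2 * (h0 * s ^ (-(ℓ : ℝ))) ^ (-γ))
    (hA4 : ∀ ℓ, φ ℓ ≤ c4 * (h0 * s ^ (-(ℓ : ℝ))) ^ β) :
    ∃ d3 : ℝ, 0 < d3 ∧ ∀ ε : ℝ, 0 < ε → ε < min (2 * φ 0) (1 / Real.exp 1) →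
      ∃ (L : ℕ) (M : ℕ → ℝ), (∀ ℓ ∈ Finset.range (L + 1), 0 < M ℓ) ∧
        c1 * (h0 * s ^ (-(L : ℝ))) ^ α +
          c3 * ∑ ℓ ∈ Finset.range (L + 1), M ℓ ^ (-μ2) * φ ℓ ≤ ε ∧
        ∑ ℓ ∈ Finset.range (L + 1), M ℓ * C ℓ ≤ d3 * ε ^ (-(1 / μ2)) :=
  stmt_16_general c1 c2 c3 c4 α β γ μ2 h0 s hc2 hc3 hc4 hα hμ2 hβγ hh0 hs C φ hφpos hA2 hA4
end

section
/- Assume hypotheses (A1)–(A4) as in the multilevel efficiency theorem with $\mu_1 = 0$, $h_\ell = h_0 s^{-\ell}$, $s>1$, $c_i \ge 1$, $\alpha < \gamma\mu_2$, and $\beta < \gamma\mu_2$. Then for every $0 < \varepsilon < \min(2\varphi_0, 1/e)$ there exist an integer $L$ and real sample sizes $M_0,\dots,M_L > 0$ such that the total error bound $c_1 h_L^\alpha + c_3\sum_{\ell=0}^L M_\ell^{-\mu_2}\varphi_\ell \le \varepsilon$ holds while $\sum_{\ell=0}^{L} M_\ell C_\ell \le d_1\, \varepsilon^{-\frac{1}{\mu_2}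 - \frac{\gamma - \beta/\mu_2}{\alpha}}$ for a constant $d_1$ independent of $\varepsilon$. -/
/-!
Take the coarsest level `L` with `c₁ h_L^α ≤ ε/2`; then `s^L ≲ ε^(-1/α)`. With
`a = (γμ₂ - β)/(1 + μ₂)` the geometric sample sizes `M_ℓ = A s^((a - γ)ℓ)` make both the
sampling-error terms `M_ℓ^(-μ₂) φ_ℓ` and the cost terms `M_ℓ C_ℓ` grow like `s^(aℓ)`, so each
sum is dominated by its last term. Choosing `A` so that the sampling error is `ε/2` gives a total
cost `≲ ε^(-1/μ₂) (s^L)^(γ - β/μ₂) ≲ ε^(-1/μ₂ - (γ - β/μ₂)/α)`.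
-/

open Finset Real

lemma mesh_rpow {h0 s : ℝ} (hh0 : 0 ≤ h0) (hs : 0 ≤ s) (p : ℝ) (ℓ : ℕ) :
    (h0 * s ^ (-(ℓ : ℝ))) ^ p = h0 ^ p * s ^ (-p * ℓ) := by
  rw [mul_rpow hh0 (rpow_nonneg hs _), ← rpow_mul hs]
  ring_nf

lemma sum_range_succ_le_of_le_geom {f : ℕ → ℝ} {K y : ℝ} (hK : 0 ≤ K) (hy : 1 < y)
    (hf : ∀ ℓ, f ℓ ≤ K * y ^ ℓ) (L : ℕ) :
    ∑ ℓ ∈ range (L + 1), f ℓ ≤ K * (y / (y - 1)) * y ^ L := by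
  have hy1 : 0 < y - 1 := by linarith
  have hgeom : ∑ ℓ ∈ range (L + 1), y ^ ℓ ≤ y / (y - 1) * y ^ L := by
    rw [geom_sum_eq hy.ne', div_le_iff₀ hy1, pow_succ]
    field_simp
    linarith
  calc ∑ ℓ ∈ range (L + 1), f ℓ ≤ ∑ ℓ ∈ range (L + 1), K * y ^ ℓ := sum_le_sum fun ℓ _ => hf ℓ
    _ = K * ∑ ℓ ∈ range (L + 1), y ^ ℓ := (mul_sum ..).symm
    _ ≤ K * (y / (y - 1)) * y ^ L := by rw [mul_assoc]; gcongr

lemma exists_le_pow_le_mul_max_one {s : ℝ} (hs : 1 < s) (X : ℝ) :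
    ∃ L : ℕ, X ≤ s ^ L ∧ s ^ L ≤ s * max 1 X := by
  rcases le_or_gt X 1 with hX | hX
  · refine ⟨0, by simpa using hX, ?_⟩
    simpa using hs.le.trans (le_mul_of_one_le_right (by linarith) (le_max_left 1 X))
  · obtain ⟨n, hn, hnX⟩ := exists_nat_pow_near hX.le hs
    refine ⟨n + 1, hnX.le, ?_⟩
    rw [pow_succ', max_eq_right hX.le]
    gcongr

lemma mul_mesh_rpow_le_of_le_pow {c α h0 s ε : ℝ} {L : ℕ} (hc : 0 < c) (hα : 0 < α)
    (hh0 : 0 ≤ h0) (hs : 0 < s) (hε : 0 < ε) (hL : h0 * (c / ε) ^ (1 / α) ≤ s ^ L) :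
    c * (h0 * s ^ (-(L : ℝ))) ^ α ≤ ε := by
  have hLα : h0 ^ α * (c / ε) ≤ (s ^ L) ^ α := by
    have := rpow_le_rpow (by positivity) hL hα.le
    rwa [mul_rpow hh0 (by positivity), ← rpow_mul (by positivity), one_div_mul_cancel hα.ne',
      rpow_one] at this
  rw [rpow_neg hs.le, rpow_natCast, ← div_eq_mul_inv, div_rpow hh0 (by positivity),
    mul_div_assoc', div_le_iff₀ (by positivity)]
  calc c * h0 ^ α = ε * (h0 ^ α * (c / ε)) := by field_simp
    _ ≤ ε * (s ^ L) ^ α := by gcongr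

lemma exists_level_spatial_error_le {c α h0 s ε : ℝ} (hc : 0 < c) (hα : 0 < α) (hh0 : 0 ≤ h0)
    (hs : 1 < s) (hε : 0 < ε) (hε1 : ε ≤ 1) :
    ∃ L : ℕ, c * (h0 * s ^ (-(L : ℝ))) ^ α ≤ ε ∧
      s ^ L ≤ s * max 1 (h0 * c ^ (1 / α)) * ε ^ (-(1 / α)) := by
  obtain ⟨L, hXL, hLX⟩ := exists_le_pow_le_mul_max_one hs (h0 * (c / ε) ^ (1 / α))
  refine ⟨L, mul_mesh_rpow_le_of_le_pow hc hα hh0 (by linarith) hε hXL, hLX.trans ?_⟩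
  have hε' : 1 ≤ ε ^ (-(1 / α)) :=
    one_le_rpow_of_pos_of_le_one_of_nonpos hε hε1 (by simp only [Left.neg_nonpos_iff]; positivity)
  rw [div_rpow hc.le hε.le, div_eq_mul_inv, ← rpow_neg hε.le, ← mul_assoc, mul_assoc s]
  gcongr
  exact max_le (one_le_mul_of_one_le_of_one_le (le_max_left _ _) hε')
    (by gcongr; exact le_max_right _ _)

section Allocation

variable {s μ β γ a A K : ℝ}

lemma sampling_error_term_le {φ : ℝ} {ℓ : ℕ} (hs : 0 < s) (hA : 0 < A)
    (ha : a * (1 + μ) = γ * μ - β) (hφ : φ ≤ K * s ^ (-β * ℓ)) :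
    (A * s ^ ((a - γ) * ℓ)) ^ (-μ) * φ ≤ A ^ (-μ) * K * (s ^ a) ^ ℓ := by
  calc (A * s ^ ((a - γ) * ℓ)) ^ (-μ) * φ
        ≤ (A * s ^ ((a - γ) * ℓ)) ^ (-μ) * (K * s ^ (-β * ℓ)) := by gcongr
    _ = A ^ (-μ) * K * s ^ ((a - γ) * ℓ * (-μ) + -β * ℓ) := by
        rw [mul_rpow hA.le (by positivity), ← rpow_mul hs.le, rpow_add hs]; ring
    _ = A ^ (-μ) * K * (s ^ a) ^ ℓ := by
        rw [← rpow_mul_natCast hs.le]; congr 2; linear_combination (-(ℓ : ℝ)) * ha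

lemma sample_cost_term_le {C : ℝ} {ℓ : ℕ} (hs : 0 < s) (hA : 0 ≤ A) (hC : C ≤ K * s ^ (γ * ℓ)) :
    A * s ^ ((a - γ) * ℓ) * C ≤ A * K * (s ^ a) ^ ℓ := by
  calc A * s ^ ((a - γ) * ℓ) * C ≤ A * s ^ ((a - γ) * ℓ) * (K * s ^ (γ * ℓ)) := by gcongr
    _ = A * K * s ^ ((a - γ) * ℓ + γ * ℓ) := by rw [rpow_add hs]; ring
    _ = A * K * (s ^ a) ^ ℓ := by rw [← rpow_mul_natCast hs.le]; ring_nf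

end Allocation

theorem exists_sample_sizes {s μ β γ c Kφ KC : ℝ} (hs : 1 < s) (hμ : 0 < μ)
    (hβγ : β < γ * μ) (hc : 0 < c) (hKφ : 0 < Kφ) (hKC : 0 < KC) {φ C : ℕ → ℝ}
    (hφ : ∀ ℓ : ℕ, φ ℓ ≤ Kφ * s ^ (-β * ℓ)) (hC : ∀ ℓ : ℕ, C ℓ ≤ KC * s ^ (γ * ℓ)) :
    ∃ D, 0 < D ∧ ∀ (L : ℕ) (ε : ℝ), 0 < ε → ∃ M : ℕ → ℝ, (∀ ℓ, 0 < M ℓ) ∧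
      c * ∑ ℓ ∈ range (L + 1), M ℓ ^ (-μ) * φ ℓ ≤ ε ∧
      ∑ ℓ ∈ range (L + 1), M ℓ * C ℓ ≤ D * ε ^ (-(1 / μ)) * (s ^ L) ^ (γ - β / μ) := by
  have hs0 : 0 < s := by linarith
  set a := (γ * μ - β) / (1 + μ)
  have ha : a * (1 + μ) = γ * μ - β := div_mul_cancel₀ _ (by positivity)
  have hy : 1 < s ^ a := one_lt_rpow hs (div_pos (by linarith) (by positivity))
  set G := s ^ a / (s ^ a - 1)
  have hG : 0 < G := div_pos (by linarith) (by linarith)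
  set B := c * Kφ * G with hB_def
  refine ⟨KC * G * B ^ (1 / μ), by positivity, fun L ε hε => ?_⟩
  set A := (B * (s ^ a) ^ L / ε) ^ (1 / μ) with hA_def
  have hA : 0 < A := by positivity
  refine ⟨fun ℓ => A * s ^ ((a - γ) * ℓ), fun ℓ => by positivity, ?_, ?_⟩
  · have hAμ : A ^ (-μ) = ε / (B * (s ^ a) ^ L) := by
      rw [← rpow_mul (by positivity), one_div_mul_eq_div, neg_div, div_self hμ.ne', rpow_neg_one,
        inv_div]
    calc c * ∑ ℓ ∈ range (L + 1), (A * s ^ ((a - γ) * ℓ)) ^ (-μ) * φ ℓ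
        ≤ c * (A ^ (-μ) * Kφ * G * (s ^ a) ^ L) := by
          gcongr
          exact sum_range_succ_le_of_le_geom (by positivity) hy
            (fun ℓ => sampling_error_term_le hs0 hA ha (hφ ℓ)) L
      _ = ε := by rw [hAμ, hB_def]; field_simp
  · have hAy : A * (s ^ a) ^ L = B ^ (1 / μ) * ε ^ (-(1 / μ)) * (s ^ L) ^ (γ - β / μ) := by
      have hB : 0 < B := by positivity
      have hsL : 0 < s ^ L := by positivity
      have hexp : a * (1 / μ) + a = γ - β / μ := by field_simp; linear_combination ha
      have hpow : (s ^ a) ^ L = (s ^ L) ^ a := by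
        rw [← rpow_natCast, ← rpow_mul hs0.le, mul_comm, rpow_mul hs0.le, rpow_natCast]
      rw [hA_def, hpow, div_rpow (by positivity) hε.le, mul_rpow hB.le (by positivity),
        ← rpow_mul hsL.le, ← hexp, rpow_add hsL, rpow_neg hε.le]
      ring
    calc ∑ ℓ ∈ range (L + 1), A * s ^ ((a - γ) * ℓ) * C ℓ
        ≤ A * KC * G * (s ^ a) ^ L :=
          sum_range_succ_le_of_le_geom (by positivity) hy
            (fun ℓ => sample_cost_term_le hs0 hA.le (hC ℓ)) L
      _ = KC * G * B ^ (1 / μ) * ε ^ (-(1 / μ)) * (s ^ L) ^ (γ - β / μ) := by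
          rw [mul_right_comm, mul_right_comm A, hAy]; ring

theorem stmt_17_general (c1 c2 c3 c4 α β γ μ2 h0 s : ℝ)
    (hc1 : 1 ≤ c1) (hc2 : 1 ≤ c2) (hc3 : 1 ≤ c3) (hc4 : 1 ≤ c4)
    (hα : 0 < α) (hμ2 : 0 < μ2)
    (hβγ : β < γ * μ2)
    (hh0 : 0 < h0) (hs : 1 < s)
    (C φ : ℕ → ℝ)
    (hA2 : ∀ ℓ, C ℓ ≤ c2 * (h0 * s ^ (-(ℓ : ℝ))) ^ (-γ))
    (hA4 : ∀ ℓ, φ ℓ ≤ c4 * (h0 * s ^ (-(ℓ : ℝ))) ^ β) :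
    ∃ d1 : ℝ, 0 < d1 ∧ ∀ ε : ℝ, 0 < ε → ε < min (2 * φ 0) (1 / Real.exp 1) →
      ∃ (L : ℕ) (M : ℕ → ℝ), (∀ ℓ ∈ Finset.range (L + 1), 0 < M ℓ) ∧
        c1 * (h0 * s ^ (-(L : ℝ))) ^ α +
          c3 * ∑ ℓ ∈ Finset.range (L + 1), M ℓ ^ (-μ2) * φ ℓ ≤ ε ∧
        ∑ ℓ ∈ Finset.range (L + 1), M ℓ * C ℓ ≤ d1 * ε ^ (-(1 / μ2) - (γ - β / μ2) / α) := by
  have hs0 : 0 < s := by linarith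
  obtain ⟨D, hD, hsample⟩ := exists_sample_sizes (c := 2 * c3) (Kφ := c4 * h0 ^ β)
    (KC := c2 * h0 ^ (-γ)) hs hμ2 hβγ (by positivity) (by positivity) (by positivity)
    (fun ℓ => by simpa only [mesh_rpow hh0.le hs0.le, mul_assoc] using hA4 ℓ)
    (fun ℓ => by simpa only [mesh_rpow hh0.le hs0.le, neg_neg, mul_assoc] using hA2 ℓ)
  set K := max 1 (h0 * (2 * c1) ^ (1 / α))
  have hb : 0 ≤ γ - β / μ2 := by rw [sub_nonneg, div_le_iff₀ hμ2]; exact hβγ.le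
  refine ⟨D * (s * K) ^ (γ - β / μ2), by positivity, fun ε hε hεlt => ?_⟩
  have hε1 : ε ≤ 1 := (hεlt.trans_le (min_le_right _ _)).le.trans
    (by rw [one_div]; exact (inv_lt_one_of_one_lt₀ (one_lt_exp_iff.mpr one_pos)).le)
  obtain ⟨L, hspatial, hsL⟩ :=
    exists_level_spatial_error_le (c := 2 * c1) (by positivity) hα hh0.le hs hε hε1
  obtain ⟨M, hM, hsampling, hcost⟩ := hsample L ε hε
  refine ⟨L, M, fun ℓ _ => hM ℓ, by linarith, hcost.trans ?_⟩
  calc D * ε ^ (-(1 / μ2)) * (s ^ L) ^ (γ - β / μ2)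
      ≤ D * ε ^ (-(1 / μ2)) * (s * K * ε ^ (-(1 / α))) ^ (γ - β / μ2) := by gcongr
    _ = D * (s * K) ^ (γ - β / μ2) * ε ^ (-(1 / μ2) - (γ - β / μ2) / α) := by
        rw [mul_rpow (by positivity) (by positivity), ← rpow_mul hε.le,
          show -(1 / μ2) - (γ - β / μ2) / α = -(1 / μ2) + -(1 / α) * (γ - β / μ2) by ring,
          rpow_add hε]
        ring

theorem stmt_17 (c1 c2 c3 c4 α β γ μ2 h0 s : ℝ)
    (hc1 : 1 ≤ c1) (hc2 : 1 ≤ c2) (hc3 : 1 ≤ c3) (hc4 : 1 ≤ c4)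
    (hα : 0 < α) (hβ : 0 < β) (hγ : 0 < γ) (hμ2 : 0 < μ2)
    (hαγ : α < γ * μ2) (hβγ : β < γ * μ2)
    (hh0 : 0 < h0) (hs : 1 < s)
    (C φ : ℕ → ℝ)
    (hCpos : ∀ ℓ, 0 < C ℓ) (hφpos : ∀ ℓ, 0 < φ ℓ)
    (hA2 : ∀ ℓ, C ℓ ≤ c2 * (h0 * s ^ (-(ℓ : ℝ))) ^ (-γ))
    (hA4 : ∀ ℓ, φ ℓ ≤ c4 * (h0 * s ^ (-(ℓ : ℝ))) ^ β) :
    ∃ d1 : ℝ, 0 < d1 ∧ ∀ ε : ℝ, 0 < ε → ε < min (2 * φ 0) (1 / Real.exp 1) →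
      ∃ (L : ℕ) (M : ℕ → ℝ), (∀ ℓ ∈ Finset.range (L + 1), 0 < M ℓ) ∧
        c1 * (h0 * s ^ (-(L : ℝ))) ^ α +
          c3 * ∑ ℓ ∈ Finset.range (L + 1), M ℓ ^ (-μ2) * φ ℓ ≤ ε ∧
        ∑ ℓ ∈ Finset.range (L + 1), M ℓ * C ℓ ≤ d1 * ε ^ (-(1 / μ2) - (γ - β / μ2) / α) :=
  stmt_17_general c1 c2 c3 c4 α β γ μ2 h0 s hc1 hc2 hc3 hc4 hα hμ2 hβγ hh0 hs C φ hA2 hA4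
end
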